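/- arXiv:2402.08536 — 4 statements merged into one kernel-verified Lean document; each statement's English description precedes it below -/
import Mathlib

section
/- Let E be a Euclidean vector space and C ⊆ E a nonempty closed set that is geometrically derivable at each of its points. Then every function R defined for pairs (x, v) with x ∈ C and v ∈ T_C(x) and satisfying R(x, v) ∈ P_C(x + v) for all such pairs is a retraction on C, i.e., for all x ∈ C and v ∈ T_C(x), lim_{t → 0⁺} (R(x, t v) − (x + t v)) / t = 0. -/
open Filter Topology

/-- The (Bouligand) tangent cone to `C` at `x`: the set of `v` for which there exist
a sequence in `C` converging to `x` and positive reals `t i` with `(x i - x) / t i → v`. -/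
def bouligandTangentCone {E : Type*} [NormedAddCommGroup E] [NormedSpace ℝ E]
    (C : Set E) (x : E) : Set E :=
  {v | ∃ (xs : ℕ → E) (ts : ℕ → ℝ), (∀ i, xs i ∈ C) ∧ (∀ i, 0 < ts i) ∧
    Tendsto xs atTop (𝓝 x) ∧
    Tendsto (fun i => (ts i)⁻¹ • (xs i - x)) atTop (𝓝 v)}

/-
The projection of `x + t v` is at least as close to `x + t v` as the point `γ t` of a curve in `C`
leaving `x` with velocity `v`, and `‖x + t v - γ t‖ = o(t)`; hence the projection is a
first-order approximation of `x + t v`.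
-/

section

variable {E : Type*} [NormedAddCommGroup E] [NormedSpace ℝ E]

lemma smul_mem_bouligandTangentCone {C : Set E} {x v : E} {t : ℝ} (ht : 0 < t)
    (hv : v ∈ bouligandTangentCone C x) : t • v ∈ bouligandTangentCone C x := by
  obtain ⟨xs, ts, hxs, hts, hlim, hdiff⟩ := hv
  refine ⟨xs, fun i => t⁻¹ * ts i, hxs, fun i => mul_pos (inv_pos.mpr ht) (hts i), hlim, ?_⟩
  convert hdiff.const_smul t using 2 with i
  rw [mul_inv, inv_inv, mul_smul]

lemma norm_inv_smul_sub_add_smul {x y v : E} {t : ℝ} (ht : 0 < t) :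
    ‖t⁻¹ • (y - (x + t • v))‖ = t⁻¹ * ‖x + t • v - y‖ := by
  rw [norm_smul, Real.norm_of_nonneg (inv_nonneg.mpr ht.le), norm_sub_rev]

lemma inv_smul_sub_sub {x y v : E} {t : ℝ} (ht : t ≠ 0) :
    t⁻¹ • (y - x) - v = t⁻¹ • (y - (x + t • v)) := by
  rw [smul_sub _ y (x + t • v), smul_add, smul_smul, inv_mul_cancel₀ ht, one_smul, smul_sub]
  abel

lemma tendsto_inv_smul_sub_of_norm_le {f g : ℝ → E} {x v : E}
    (hg : Tendsto (fun t : ℝ => t⁻¹ • (g t - x)) (𝓝[>] 0) (𝓝 v))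
    (hfg : ∀ᶠ t in 𝓝[>] 0, ‖x + t • v - f t‖ ≤ ‖x + t • v - g t‖) :
    Tendsto (fun t : ℝ => t⁻¹ • (f t - (x + t • v))) (𝓝[>] 0) (𝓝 0) := by
  have hg' : Tendsto (fun t : ℝ => ‖t⁻¹ • (g t - x) - v‖) (𝓝[>] 0) (𝓝 0) := by
    simpa using (hg.sub_const v).norm
  refine squeeze_zero_norm' ?_ hg'
  filter_upwards [self_mem_nhdsWithin, hfg] with t (ht : 0 < t) hle
  rw [inv_smul_sub_sub ht.ne', norm_inv_smul_sub_add_smul ht, norm_inv_smul_sub_add_smul ht]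
  exact mul_le_mul_of_nonneg_left hle (inv_nonneg.mpr ht.le)

end

theorem projective_retraction_of_geometrically_derivable_general
    {E : Type*} [NormedAddCommGroup E] [InnerProductSpace ℝ E]
    (C : Set E)
    (hgd : ∀ x ∈ C, ∀ v ∈ bouligandTangentCone C x,
      ∃ ε > (0 : ℝ), ∃ γ : ℝ → E,
        (∀ t ∈ Set.Icc (0 : ℝ) ε, γ t ∈ C) ∧ γ 0 = x ∧
        Tendsto (fun t : ℝ => t⁻¹ • (γ t - γ 0)) (𝓝[>] 0) (𝓝 v))
    (R : E → E → E)
    (hR : ∀ x ∈ C, ∀ v ∈ bouligandTangentCone C x,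
      R x v ∈ C ∧ ∀ w ∈ C, ‖x + v - R x v‖ ≤ ‖x + v - w‖) :
    ∀ x ∈ C, ∀ v ∈ bouligandTangentCone C x,
      Tendsto (fun t : ℝ => t⁻¹ • (R x (t • v) - (x + t • v))) (𝓝[>] 0) (𝓝 0) := by
  intro x hx v hv
  obtain ⟨ε, hε, γ, hγC, rfl, hγ⟩ := hgd x hx v hv
  refine tendsto_inv_smul_sub_of_norm_le hγ ?_
  filter_upwards [self_mem_nhdsWithin, Icc_mem_nhdsGT hε] with t (ht : 0 < t) htε
  exact (hR _ hx _ (smul_mem_bouligandTangentCone ht hv)).2 _ (hγC t htε)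

/-- If the nonempty closed set `C` is geometrically derivable at each of its
points, then every map `R` with `R x v ∈ P_C (x + v)` for all `x ∈ C` and `v ∈ T_C x`
is a retraction on `C`: for all `x ∈ C` and `v ∈ T_C x`,
`(R x (t v) - (x + t v)) / t → 0` as `t → 0⁺`. -/
theorem projective_retraction_of_geometrically_derivable
    {E : Type*} [NormedAddCommGroup E] [InnerProductSpace ℝ E] [FiniteDimensional ℝ E]
    (C : Set E) (hCne : C.Nonempty) (hCcl : IsClosed C)
    (hgd : ∀ x ∈ C, ∀ v ∈ bouligandTangentCone C x,
      ∃ ε > (0 : ℝ), ∃ γ : ℝ → E,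
        (∀ t ∈ Set.Icc (0 : ℝ) ε, γ t ∈ C) ∧ γ 0 = x ∧
        Tendsto (fun t : ℝ => t⁻¹ • (γ t - γ 0)) (𝓝[>] 0) (𝓝 v))
    (R : E → E → E)
    (hR : ∀ x ∈ C, ∀ v ∈ bouligandTangentCone C x,
      R x v ∈ C ∧ ∀ w ∈ C, ‖x + v - R x v‖ ≤ ‖x + v - w‖) :
    ∀ x ∈ C, ∀ v ∈ bouligandTangentCone C x,
      Tendsto (fun t : ℝ => t⁻¹ • (R x (t • v) - (x + t • v))) (𝓝[>] 0) (𝓝 0) :=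
  projective_retraction_of_geometrically_derivable_general C hgd R hR
end

section
/- Let m, n, r be positive integers with r < min{m, n}, and let X ∈ ℝ^{m×n} be nonzero with r̲ := rank X ≤ r. Suppose X = U diag(σ₁, …, σ_{r̲}, 0, …, 0) Vᵀ where U ∈ ℝ^{m×(r+1)} and V ∈ ℝ^{n×(r+1)} have orthonormal columns (UᵀU = VᵀV = I_{r+1}) and σ₁ ≥ … ≥ σ_{r̲} > 0. Then for every t₀ > 0, the matrix Z := (σ_{r̲}/t₀) U D Vᵀ, where D is the (r+1)×(r+1) block-diagonal matrix diag(0_{(r̲−1)×(r̲−1)}, [[−1, 1/2], [1/2, 0]], (3/4) I_{r−r̲}), belongs to the tangent cone to ℝ^{m×n}_{≤r} at X. -/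
/-!
Write `p = k - 1`, `q = k` (0-based, so `σ p` is the informal `σ_k` and `σ q = 0`),
`Σ = diagonal σ` and `E = single q q 1`. For `0 < τ < 1` the matrix
`S τ = Σ + σ_p τ • D + σ_p τ² / (4 (1 - τ)) • E` is block diagonal, and its block on the
indices `p, q` is `[[σ_p (1 - τ), σ_p τ / 2], [σ_p τ / 2, σ_p τ² / (4 (1 - τ))]]`, which is
singular. Hence `S τ`, and with it `U (S τ) Vᵀ`, has rank at most `r`. With `τ = t / t₀` this
curve is `X + t (Z + c t • U E Vᵀ)` where `c t → 0`, so `Z` is a tangent vector at `X`.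
-/

open Filter Topology Matrix

/-- The determinantal variety of `m × n` real matrices of rank at most `r`. -/
def lowRankVariety (m n r : ℕ) : Set (Matrix (Fin m) (Fin n) ℝ) :=
  {A | A.rank ≤ r}

/-- The (Bouligand) tangent cone to the determinantal variety at `X`. -/
def lowRankTangentCone (m n r : ℕ) (X : Matrix (Fin m) (Fin n) ℝ) :
    Set (Matrix (Fin m) (Fin n) ℝ) :=
  {V | ∃ (Xs : ℕ → Matrix (Fin m) (Fin n) ℝ) (ts : ℕ → ℝ),
    (∀ i, Xs i ∈ lowRankVariety m n r) ∧ (∀ i, 0 < ts i) ∧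
    Tendsto Xs atTop (𝓝 X) ∧
    Tendsto (fun i => (ts i)⁻¹ • (Xs i - X)) atTop (𝓝 V)}

/-- The `(r+1) × (r+1)` block-diagonal matrix
`diag(0_{(k−1)×(k−1)}, [[−1, 1/2], [1/2, 0]], (3/4) I_{r−k})`
(indices `0, …, k−2` carry the zero block, indices `k−1, k` carry the `2 × 2` block,
and indices `k+1, …, r` carry the diagonal entries `3/4`). -/
noncomputable def blockD (r k : ℕ) : Matrix (Fin (r + 1)) (Fin (r + 1)) ℝ :=
  Matrix.of fun i j : Fin (r + 1) =>
    if (i : ℕ) = k - 1 ∧ (j : ℕ) = k - 1 then -1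
    else if ((i : ℕ) = k - 1 ∧ (j : ℕ) = k) ∨ ((i : ℕ) = k ∧ (j : ℕ) = k - 1) then 1 / 2
    else if (i : ℕ) = (j : ℕ) ∧ k + 1 ≤ (i : ℕ) then 3 / 4
    else 0

theorem Matrix.rank_lt_card_width_of_mulVec_eq_zero {m n K : Type*} [Fintype n] [Field K]
    (A : Matrix m n K) {w : n → K} (hw : w ≠ 0) (hA : A *ᵥ w = 0) :
    A.rank < Fintype.card n := by
  have hker : 0 < Module.finrank K (LinearMap.ker A.mulVecLin) :=
    Module.finrank_pos_iff_exists_ne_zero.mpr ⟨⟨w, hA⟩, by simpa [Subtype.ext_iff] using hw⟩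
  have := LinearMap.finrank_range_add_finrank_ker A.mulVecLin
  rw [Module.finrank_fintype_fun_eq_card] at this
  rw [Matrix.rank]
  omega

theorem mem_lowRankTangentCone_of_eventually {m n r : ℕ} {X V : Matrix (Fin m) (Fin n) ℝ}
    (γ : ℝ → Matrix (Fin m) (Fin n) ℝ)
    (hmem : ∀ᶠ t in 𝓝[>] 0, X + t • γ t ∈ lowRankVariety m n r)
    (hγ : Tendsto γ (𝓝[>] 0) (𝓝 V)) :
    V ∈ lowRankTangentCone m n r X := by
  obtain ⟨ts, hts, hmem_pos⟩ :=
    exists_seq_forall_of_frequently (hmem.and self_mem_nhdsWithin).frequently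
  have hts0 : Tendsto ts atTop (𝓝 0) := tendsto_nhdsWithin_iff.mp hts |>.1
  refine ⟨fun i => X + ts i • γ (ts i), ts, fun i => (hmem_pos i).1, fun i => (hmem_pos i).2,
    ?_, ?_⟩
  · simpa using tendsto_const_nhds.add (hts0.smul (hγ.comp hts))
  · refine (hγ.comp hts).congr fun i => ?_
    rw [add_sub_cancel_left, smul_smul, inv_mul_cancel₀ (hmem_pos i).2.ne', one_smul,
      Function.comp_apply]

section blockD

variable {r k : ℕ} {p q : Fin (r + 1)}

theorem blockD_mulVec_single_pred (hk : 1 ≤ k) (hp : (p : ℕ) = k - 1) (hq : (q : ℕ) = k) :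
    blockD r k *ᵥ Pi.single p 1 = Pi.single p (-1) + Pi.single q (1 / 2) := by
  ext j
  rw [mulVec_single_one, col_apply]
  simp only [blockD, of_apply, Pi.add_apply, Pi.single_apply, Fin.ext_iff, hp, hq]
  grind

theorem blockD_mulVec_single (hk : 1 ≤ k) (hp : (p : ℕ) = k - 1) (hq : (q : ℕ) = k) :
    blockD r k *ᵥ Pi.single q 1 = Pi.single p (1 / 2) := by
  ext j
  rw [mulVec_single_one, col_apply]
  simp only [blockD, of_apply, Pi.single_apply, Fin.ext_iff, hp, hq]
  grind

theorem diagonal_add_blockD_mulVec_eq_zero (σ : Fin (r + 1) → ℝ) (hk : 1 ≤ k)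
    (hp : (p : ℕ) = k - 1) (hq : (q : ℕ) = k) (hσq : σ q = 0) {τ : ℝ} (hτ : τ ≠ 1) :
    (diagonal σ + (σ p * τ) • blockD r k + (σ p * τ ^ 2 / (4 * (1 - τ))) • single q q 1) *ᵥ
      (τ • Pi.single p 1 - (2 * (1 - τ)) • Pi.single q 1) = 0 := by
  have hpq : p ≠ q := by rw [Ne, Fin.ext_iff]; omega
  have h1τ : 1 - τ ≠ 0 := sub_ne_zero.mpr hτ.symm
  simp only [mulVec_sub, mulVec_smul, add_mulVec, smul_mulVec, diagonal_mulVec_single,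
    blockD_mulVec_single_pred hk hp hq, blockD_mulVec_single hk hp hq, single_mulVec_eq,
    Pi.single_eq_same, Pi.single_eq_of_ne hpq.symm, hσq]
  ext j
  simp only [Pi.add_apply, Pi.sub_apply, Pi.smul_apply, Pi.single_apply, smul_eq_mul,
    Pi.zero_apply]
  split_ifs <;> field_simp <;> ring

theorem rank_diagonal_add_blockD_le (σ : Fin (r + 1) → ℝ) (hk : 1 ≤ k)
    (hp : (p : ℕ) = k - 1) (hq : (q : ℕ) = k) (hσq : σ q = 0) {τ : ℝ} (hτ : τ ≠ 1) :
    (diagonal σ + (σ p * τ) • blockD r k + (σ p * τ ^ 2 / (4 * (1 - τ))) • single q q 1).rank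
      ≤ r := by
  have hpq : p ≠ q := by rw [Ne, Fin.ext_iff]; omega
  have hw : τ • Pi.single p (1 : ℝ) - (2 * (1 - τ)) • Pi.single q 1 ≠ 0 := fun h => by
    have := congrFun h q
    simp [Pi.single_eq_of_ne hpq.symm, sub_eq_zero, hτ.symm] at this
  simpa [Nat.lt_succ_iff] using rank_lt_card_width_of_mulVec_eq_zero _ hw
    (diagonal_add_blockD_mulVec_eq_zero σ hk hp hq hσq hτ)

end blockD

/-- with `X = U diag(σ₁, …, σ_k, 0, …, 0) Vᵀ` a (partial) SVD of the nonzero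
matrix `X` of rank `k ≤ r`, for every `t₀ > 0` the matrix
`Z = (σ_k / t₀) U diag(0_{(k−1)×(k−1)}, [[−1, 1/2], [1/2, 0]], (3/4) I_{r−k}) Vᵀ`
belongs to the tangent cone to `ℝ^{m×n}_{≤r}` at `X`. -/
theorem Z_mem_tangent_cone
    (m n r k : ℕ) (hk1 : 1 ≤ k) (hkr : k ≤ r)
    (U : Matrix (Fin m) (Fin (r + 1)) ℝ) (V : Matrix (Fin n) (Fin (r + 1)) ℝ)
    (σ : Fin (r + 1) → ℝ)
    (hσzero : ∀ i : Fin (r + 1), k ≤ (i : ℕ) → σ i = 0)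
    (X : Matrix (Fin m) (Fin n) ℝ)
    (hX : X = U * Matrix.diagonal σ * Vᵀ)
    (t₀ : ℝ) (ht₀ : 0 < t₀)
    (Z : Matrix (Fin m) (Fin n) ℝ)
    (hZ : Z = (σ ⟨k - 1, by omega⟩ / t₀) • (U * blockD r k * Vᵀ)) :
    Z ∈ lowRankTangentCone m n r X := by
  set p : Fin (r + 1) := ⟨k - 1, by omega⟩
  set q : Fin (r + 1) := ⟨k, by omega⟩
  set W := U * single q q (1 : ℝ) * Vᵀ
  set c : ℝ → ℝ := fun t => σ p * t / (4 * t₀ * (t₀ - t))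
  have hcurve {t : ℝ} (ht : t < t₀) : X + t • (Z + c t • W) =
      U * (diagonal σ + (σ p * (t / t₀)) • blockD r k
        + (σ p * (t / t₀) ^ 2 / (4 * (1 - t / t₀))) • single q q 1) * Vᵀ := by
    rw [hX, hZ]
    simp only [W, c, Matrix.add_mul, Matrix.mul_add, Matrix.smul_mul, Matrix.mul_smul]
    match_scalars <;> field_simp [ht₀.ne', (sub_pos.mpr ht).ne']
  refine mem_lowRankTangentCone_of_eventually (fun t => Z + c t • W) ?_ ?_
  · filter_upwards [Ioo_mem_nhdsGT ht₀] with t ht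
    change (X + t • (Z + c t • W)).rank ≤ r
    rw [hcurve ht.2]
    exact (rank_mul_le_left _ _).trans <| (rank_mul_le_right _ _).trans <|
      rank_diagonal_add_blockD_le σ hk1 rfl rfl (hσzero q le_rfl)
        ((div_lt_one ht₀).mpr ht.2).ne
  · have hc : ContinuousAt c 0 := by fun_prop (disch := simp [ht₀.ne'])
    simpa [c] using tendsto_nhdsWithin_of_tendsto_nhds
      (tendsto_const_nhds.add (hc.tendsto.smul_const W))
end

section
/- Let E be a Euclidean vector space, C ⊆ E nonempty and closed, f : E → ℝ continuously differentiable, c ∈ (0, 1), x ∈ C, and v ∈ T_C(x) with ⟨∇f(x), v⟩ < 0. Let R be a retraction on C, i.e., a C-valued map on pairs (y, w) with y ∈ C, w ∈ T_C(y) such that lim_{t → 0⁺} (R(y, t w) − (y + t w))/t = 0. Then there exists α* > 0 such that for all t ∈ [0, α*], the Armijo condition f(R(x, t v)) ≤ f(x) + c t ⟨∇f(x), v⟩ holds. -/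
open Filter Topology

/-!
The retraction curve `t ↦ R(x, t v)` leaves `x` with velocity `v`, so by the chain rule the
difference quotient `(f(R(x, t v)) - f(x)) / t` tends to `⟨∇f(x), v⟩ < c ⟨∇f(x), v⟩` as
`t → 0⁺`. At `t = 0` the retraction condition for `w = 0` forces `R(x, 0) = x`.
-/

section Slope

variable {E F : Type*} [NormedAddCommGroup E] [NormedSpace ℝ E]
  [NormedAddCommGroup F] [NormedSpace ℝ F]

theorem tendsto_nhds_zero_of_tendsto_inv_smul {g : ℝ → E} {v : E}
    (h : Tendsto (fun t => t⁻¹ • g t) (𝓝[>] 0) (𝓝 v)) : Tendsto g (𝓝[>] 0) (𝓝 0) := by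
  have hsmul := (tendsto_nhdsWithin_of_tendsto_nhds tendsto_id).smul h
  rw [zero_smul] at hsmul
  refine hsmul.congr' ?_
  filter_upwards [self_mem_nhdsWithin] with t (ht : 0 < t)
  exact smul_inv_smul₀ ht.ne' (g t)

theorem HasFDerivAt.tendsto_inv_smul_sub_comp {f : E → F} {f' : E →L[ℝ] F} {x : E}
    (hf : HasFDerivAt f f' x) {γ : ℝ → E} {v : E}
    (hγ : Tendsto (fun t => t⁻¹ • (γ t - x)) (𝓝[>] 0) (𝓝 v)) :
    Tendsto (fun t => t⁻¹ • (f (γ t) - f x)) (𝓝[>] 0) (𝓝 (f' v)) := by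
  simpa using hf.hasFDerivWithinAt.lim (s := Set.univ)
    (tendsto_nhds_zero_of_tendsto_inv_smul hγ) (by simp) hγ

theorem exists_forall_Icc_le_add_mul_of_tendsto_slope {g : ℝ → ℝ} {L M : ℝ}
    (hg : Tendsto (fun t => t⁻¹ * (g t - g 0)) (𝓝[>] 0) (𝓝 L)) (hLM : L < M) :
    ∃ α > (0 : ℝ), ∀ t ∈ Set.Icc (0 : ℝ) α, g t ≤ g 0 + M * t := by
  obtain ⟨α, hα, hslope⟩ := mem_nhdsGT_iff_exists_Ioc_subset.mp (hg.eventually_lt_const hLM)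
  refine ⟨α, hα, fun t ⟨ht0, htα⟩ => ?_⟩
  rcases ht0.eq_or_lt with rfl | ht0
  · simp
  · have h : t⁻¹ * (g t - g 0) < M := hslope ⟨ht0, htα⟩
    rw [inv_mul_lt_iff₀ ht0] at h
    linarith

end Slope

section Retraction

variable {E : Type*} [NormedAddCommGroup E] [NormedSpace ℝ E] {C : Set E} {x : E}

theorem zero_mem_bouligandTangentCone (hx : x ∈ C) : (0 : E) ∈ bouligandTangentCone C x :=
  ⟨fun _ => x, fun _ => 1, fun _ => hx, fun _ => one_pos, tendsto_const_nhds, by simp⟩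

variable {R : E → E → E}

theorem retraction_apply_zero (hx : x ∈ C)
    (hRlim : ∀ w ∈ bouligandTangentCone C x,
      Tendsto (fun t : ℝ => t⁻¹ • (R x (t • w) - (x + t • w))) (𝓝[>] 0) (𝓝 0)) :
    R x 0 = x := by
  have h := tendsto_nhds_zero_of_tendsto_inv_smul (hRlim 0 (zero_mem_bouligandTangentCone hx))
  simp only [smul_zero, add_zero] at h
  exact sub_eq_zero.mp (tendsto_nhds_unique tendsto_const_nhds h)

theorem tendsto_inv_smul_retraction_sub {v : E}
    (hRlim : Tendsto (fun t : ℝ => t⁻¹ • (R x (t • v) - (x + t • v))) (𝓝[>] 0) (𝓝 0)) :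
    Tendsto (fun t : ℝ => t⁻¹ • (R x (t • v) - x)) (𝓝[>] 0) (𝓝 v) := by
  have h := hRlim.add_const v
  rw [zero_add] at h
  refine h.congr' ?_
  filter_upwards [self_mem_nhdsWithin] with t (ht : 0 < t)
  rw [smul_sub, smul_add, inv_smul_smul₀ ht.ne', smul_sub]
  abel

end Retraction

theorem armijo_condition_holds_general
    {E : Type*} [NormedAddCommGroup E] [InnerProductSpace ℝ E] [FiniteDimensional ℝ E]
    (C : Set E) (f : E → ℝ) (hf : ContDiff ℝ 1 f)
    (c : ℝ) (hc : c ∈ Set.Ioo (0 : ℝ) 1)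
    (x : E) (hx : x ∈ C) (v : E) (hv : v ∈ bouligandTangentCone C x)
    (hdesc : inner ℝ (gradient f x) v < (0 : ℝ))
    (R : E → E → E)
    (hRlim : ∀ y ∈ C, ∀ w ∈ bouligandTangentCone C y,
      Tendsto (fun t : ℝ => t⁻¹ • (R y (t • w) - (y + t • w))) (𝓝[>] 0) (𝓝 0)) :
    ∃ αs > (0 : ℝ), ∀ t ∈ Set.Icc (0 : ℝ) αs,
      f (R x (t • v)) ≤ f x + c * t * inner ℝ (gradient f x) v := by
  have hR0 : R x 0 = x := retraction_apply_zero hx (hRlim x hx)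
  have hgrad : HasFDerivAt f (InnerProductSpace.toDual ℝ E (gradient f x)) x :=
    ((hf.differentiable one_ne_zero).differentiableAt.hasGradientAt).hasFDerivAt
  have hslope : Tendsto (fun t : ℝ => t⁻¹ * (f (R x (t • v)) - f (R x ((0 : ℝ) • v))))
      (𝓝[>] 0) (𝓝 (inner ℝ (gradient f x) v)) := by
    simpa [hR0] using
      hgrad.tendsto_inv_smul_sub_comp (tendsto_inv_smul_retraction_sub (hRlim x hx v hv))
  have hc_slope : inner ℝ (gradient f x) v < c * inner ℝ (gradient f x) v := by
    nlinarith [hc.2]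
  obtain ⟨α, hα, harmijo⟩ := exists_forall_Icc_le_add_mul_of_tendsto_slope hslope hc_slope
  refine ⟨α, hα, fun t ht => ?_⟩
  have h := harmijo t ht
  rw [zero_smul, hR0] at h
  linarith

/-- let `f` be continuously differentiable, `c ∈ (0, 1)`, `x ∈ C`,
`v ∈ T_C x` with `⟨∇f(x), v⟩ < 0`, and `R` a retraction on `C`. Then there exists
`α* > 0` such that for all `t ∈ [0, α*]`, the Armijo condition
`f(R(x, t v)) ≤ f(x) + c t ⟨∇f(x), v⟩` holds. -/
theorem armijo_condition_holds
    {E : Type*} [NormedAddCommGroup E] [InnerProductSpace ℝ E] [FiniteDimensional ℝ E]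
    (C : Set E) (hCne : C.Nonempty) (hCcl : IsClosed C)
    (f : E → ℝ) (hf : ContDiff ℝ 1 f)
    (c : ℝ) (hc : c ∈ Set.Ioo (0 : ℝ) 1)
    (x : E) (hx : x ∈ C) (v : E) (hv : v ∈ bouligandTangentCone C x)
    (hdesc : inner ℝ (gradient f x) v < (0 : ℝ))
    (R : E → E → E)
    (hRC : ∀ y ∈ C, ∀ w ∈ bouligandTangentCone C y, R y w ∈ C)
    (hRlim : ∀ y ∈ C, ∀ w ∈ bouligandTangentCone C y,
      Tendsto (fun t : ℝ => t⁻¹ • (R y (t • w) - (y + t • w))) (𝓝[>] 0) (𝓝 0)) :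
    ∃ αs > (0 : ℝ), ∀ t ∈ Set.Icc (0 : ℝ) αs,
      f (R x (t • v)) ≤ f x + c * t * inner ℝ (gradient f x) v :=
  armijo_condition_holds_general C f hf c hc x hx v hv hdesc R hRlim
end

section
/- Let E be a Euclidean vector space, C ⊆ E nonempty and closed, f : E → ℝ continuously differentiable, β, c ∈ (0, 1), x ∈ C, v ∈ T_C(x) with ⟨∇f(x), v⟩ < 0, and R a retraction on C. Suppose α* > 0 is such that f(R(x, t v)) ≤ f(x) + c t ⟨∇f(x), v⟩ for all t ∈ [0, α*]. Then for every initial step size α > 0, the smallest i ∈ ℕ such that f(R(x, α βⁱ v)) ≤ f(x) + c α βⁱ ⟨∇f(x), v⟩ exists and satisfies i ≤ max{0, ⌈ln(α*/α)/ln β⌉}, and the accepted step size ᾱ := α βⁱ satisfies ᾱ ≥ min{α, α* β}. -/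
open Filter Topology

/-!
With `n = max 0 ⌈ln(α*/α)/ln β⌉` we get `α βⁿ ≤ α*`, so the `n`-th trial step passes the Armijo
test and the first accepted index `i` is at most `n`. If `i > 0`, the rejected step `α βⁱ⁻¹`
exceeds `α*`, whence `α βⁱ > α* β`.
-/

open Real Set

section Backtracking

variable {α αs β : ℝ}

theorem pow_le_of_log_div_log_le (hβ : β ∈ Ioo 0 1) {r : ℝ} (hr : 0 < r) {n : ℕ}
    (hn : log r / log β ≤ n) : β ^ n ≤ r := by
  rw [div_le_iff_of_neg (log_neg hβ.1 hβ.2), ← log_pow] at hn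
  exact (log_le_log_iff (pow_pos hβ.1 n) hr).1 hn

theorem mul_pow_le_of_ceil_log_div_log_le (hβ : β ∈ Ioo 0 1) (hα : 0 < α) (hαs : 0 < αs)
    {n : ℕ} (hn : ⌈log (αs / α) / log β⌉ ≤ n) : α * β ^ n ≤ αs := by
  have hβn : β ^ n ≤ αs / α :=
    pow_le_of_log_div_log_le hβ (div_pos hαs hα) ((Int.le_ceil _).trans (by exact_mod_cast hn))
  rwa [← le_div_iff₀' hα]

theorem min_le_mul_pow_of_forall_lt_mul_pow (hβ : 0 < β) {i : ℕ}
    (hrejected : ∀ j < i, αs < α * β ^ j) : min α (αs * β) ≤ α * β ^ i := by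
  cases i with
  | zero => simp
  | succ k =>
    calc min α (αs * β) ≤ αs * β := min_le_right _ _
      _ ≤ α * β ^ k * β := by gcongr; exact (hrejected k k.lt_succ_self).le
      _ = α * β ^ (k + 1) := by rw [pow_succ, mul_assoc]

theorem exists_first_accepted_backtracking_step (hβ : β ∈ Ioo 0 1) (hα : 0 < α)
    (hαs : 0 < αs) {P : ℝ → Prop} (hP : ∀ t ∈ Ioc 0 αs, P t) :
    ∃ i : ℕ, P (α * β ^ i) ∧ (∀ j : ℕ, P (α * β ^ j) → i ≤ j) ∧
      (i : ℤ) ≤ max 0 ⌈log (αs / α) / log β⌉ ∧ min α (αs * β) ≤ α * β ^ i := by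
  classical
  set n := (max 0 ⌈log (αs / α) / log β⌉).toNat
  have hn : (n : ℤ) = max 0 ⌈log (αs / α) / log β⌉ := Int.toNat_of_nonneg (le_max_left _ _)
  have hstep_pos : ∀ j : ℕ, 0 < α * β ^ j := fun j => mul_pos hα (pow_pos hβ.1 j)
  have hPn : P (α * β ^ n) :=
    hP _ ⟨hstep_pos n, mul_pow_le_of_ceil_log_div_log_le hβ hα hαs (hn ▸ le_max_right _ _)⟩
  have hex : ∃ i : ℕ, P (α * β ^ i) := ⟨n, hPn⟩
  refine ⟨Nat.find hex, Nat.find_spec hex, fun j hj => Nat.find_min' hex hj,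
    hn ▸ by exact_mod_cast Nat.find_min' hex hPn,
    min_le_mul_pow_of_forall_lt_mul_pow hβ.1 fun j hj => ?_⟩
  by_contra hle
  exact Nat.find_min hex hj (hP _ ⟨hstep_pos j, not_lt.1 hle⟩)

end Backtracking

theorem backtracking_terminates_general
    {E : Type*} [NormedAddCommGroup E] [InnerProductSpace ℝ E] [FiniteDimensional ℝ E]
    (f : E → ℝ)
    (β c : ℝ) (hβ : β ∈ Set.Ioo (0 : ℝ) 1)
    (x : E) (v : E)
    (R : E → E → E)
    (αs : ℝ) (hαs : 0 < αs)
    (hArmijo : ∀ t ∈ Set.Icc (0 : ℝ) αs,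
      f (R x (t • v)) ≤ f x + c * t * inner ℝ (gradient f x) v)
    (α : ℝ) (hα : 0 < α) :
    ∃ i : ℕ,
      (f (R x ((α * β ^ i) • v)) ≤ f x + c * (α * β ^ i) * inner ℝ (gradient f x) v) ∧
      (∀ j : ℕ,
        (f (R x ((α * β ^ j) • v)) ≤ f x + c * (α * β ^ j) * inner ℝ (gradient f x) v) →
        i ≤ j) ∧
      (i : ℤ) ≤ max 0 ⌈Real.log (αs / α) / Real.log β⌉ ∧
      min α (αs * β) ≤ α * β ^ i :=
  exists_first_accepted_backtracking_step hβ hα hαs fun t ht =>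
    hArmijo t (Set.Ioc_subset_Icc_self ht)

/-- under an Armijo guarantee on `[0, α*]`, the backtracking line search with
initial step size `α > 0` and contraction factor `β ∈ (0, 1)` terminates: the smallest
`i ∈ ℕ` whose step `α βⁱ` satisfies the Armijo condition exists, it is at most
`max {0, ⌈ln(α*/α)/ln β⌉}`, and the accepted step size `α βⁱ` is at least
`min {α, α* β}`. -/
theorem backtracking_terminates
    {E : Type*} [NormedAddCommGroup E] [InnerProductSpace ℝ E] [FiniteDimensional ℝ E]
    (C : Set E) (hCne : C.Nonempty) (hCcl : IsClosed C)
    (f : E → ℝ) (hf : ContDiff ℝ 1 f)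
    (β c : ℝ) (hβ : β ∈ Set.Ioo (0 : ℝ) 1) (hc : c ∈ Set.Ioo (0 : ℝ) 1)
    (x : E) (hx : x ∈ C) (v : E) (hv : v ∈ bouligandTangentCone C x)
    (hdesc : inner ℝ (gradient f x) v < (0 : ℝ))
    (R : E → E → E)
    (hRC : ∀ y ∈ C, ∀ w ∈ bouligandTangentCone C y, R y w ∈ C)
    (hRlim : ∀ y ∈ C, ∀ w ∈ bouligandTangentCone C y,
      Tendsto (fun t : ℝ => t⁻¹ • (R y (t • w) - (y + t • w))) (𝓝[>] 0) (𝓝 0))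
    (αs : ℝ) (hαs : 0 < αs)
    (hArmijo : ∀ t ∈ Set.Icc (0 : ℝ) αs,
      f (R x (t • v)) ≤ f x + c * t * inner ℝ (gradient f x) v)
    (α : ℝ) (hα : 0 < α) :
    ∃ i : ℕ,
      (f (R x ((α * β ^ i) • v)) ≤ f x + c * (α * β ^ i) * inner ℝ (gradient f x) v) ∧
      (∀ j : ℕ,
        (f (R x ((α * β ^ j) • v)) ≤ f x + c * (α * β ^ j) * inner ℝ (gradient f x) v) →
        i ≤ j) ∧
      (i : ℤ) ≤ max 0 ⌈Real.log (αs / α) / Real.log β⌉ ∧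
      min α (αs * β) ≤ α * β ^ i :=
  backtracking_terminates_general f β c hβ x v R αs hαs hArmijo α hα
end
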